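/- arXiv:1006.0505 — 2 statements merged into one kernel-verified Lean document; each statement's English description precedes it below -/
import Mathlib

section
/- For each p ∈ (-1,∞) there exists a constant C > 0 such that for every real s with |s| > 1 one has | λ_p(s) − |s|^p | ≤ C·|s|^{p-2}. -/
open MeasureTheory ProbabilityTheory Real Set Metric

/-!
Since `E Z = 0`, `λ_p(s) - s ^ p = E R_s(Z)` with `R_s(z) = |z + s| ^ p - s ^ p - p s ^ (p - 1) z`,
and by the symmetry of `Z` it suffices to treat `s > 1`. Where `|z| ≤ s / 2`, the second-order
Taylor bound for `(1 + t) ^ p` on `|t| ≤ 1 / 2`, rescaled by `s`, gives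
`|R_s(z)| ≤ K s ^ (p - 2) z ^ 2`. Where `|z| > s / 2`, the Gaussian density is at most
`e^{-s²/18} e^{-(z+s)²/36}`; against this weight `|z + s| ^ p` has an integral independent of `s`,
and `e^{-s²/18}` is `O(s ^ (p - 2))`.
-/

/-- The standard Gaussian measure `N(0,1)` on `ℝ`. -/
noncomputable def γ : Measure ℝ := gaussianReal 0 1

/-- `λ_p(s) = E|Z+s|^p` for a standard normal `Z`. -/
noncomputable def lam (p s : ℝ) : ℝ := ∫ z, |z + s| ^ p ∂γ

theorem integrable_abs_rpow_mul_exp_neg_mul_sq {q c : ℝ} (hq : -1 < q) (hc : 0 < c) :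
    Integrable fun x : ℝ => |x| ^ q * exp (-c * x ^ 2) := by
  have hIoi : IntegrableOn (fun x : ℝ => |x| ^ q * exp (-c * x ^ 2)) (Ioi 0) :=
    (integrableOn_rpow_mul_exp_neg_mul_sq hc hq).congr_fun
      (fun x (hx : 0 < x) => by rw [abs_of_pos hx]) measurableSet_Ioi
  rw [← integrableOn_univ, ← Iio_union_Ici (a := (0 : ℝ)), integrableOn_union,
    integrableOn_Ici_iff_integrableOn_Ioi]
  refine ⟨?_, hIoi⟩
  rw [← (Measure.measurePreserving_neg (volume : Measure ℝ)).integrableOn_comp_preimage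
      (Homeomorph.neg ℝ).measurableEmbedding]
  simpa only [Function.comp_def, neg_sq, neg_preimage, neg_Iio, neg_zero, abs_neg] using hIoi

theorem abs_sub_sub_mul_le_of_hasDerivAt {f f' f'' : ℝ → ℝ} {r M : ℝ}
    (hf : ∀ x ∈ closedBall (0 : ℝ) r, HasDerivAt f (f' x) x)
    (hf' : ∀ x ∈ closedBall (0 : ℝ) r, HasDerivAt f' (f'' x) x)
    (hM : ∀ x ∈ closedBall (0 : ℝ) r, |f'' x| ≤ M) {t : ℝ} (ht : |t| ≤ r) :
    |f t - f 0 - f' 0 * t| ≤ M * t ^ 2 := by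
  have h0 : (0 : ℝ) ∈ closedBall 0 r := mem_closedBall_self ((abs_nonneg t).trans ht)
  have hM0 : 0 ≤ M := (abs_nonneg _).trans (hM 0 h0)
  have hf'_lip : ∀ x ∈ closedBall (0 : ℝ) r, |f' x - f' 0| ≤ M * |x| := fun x hx => by
    simpa using (convex_closedBall (0 : ℝ) r).norm_image_sub_le_of_norm_hasDerivWithin_le
      (fun y hy => (hf' y hy).hasDerivWithinAt) hM h0 hx
  have hsub : closedBall (0 : ℝ) |t| ⊆ closedBall 0 r := closedBall_subset_closedBall ht
  have key := (convex_closedBall (0 : ℝ) |t|).norm_image_sub_le_of_norm_hasDerivWithin_le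
    (f := fun x => f x - f' 0 * x) (f' := fun x => f' x - f' 0) (C := M * |t|)
    (fun x hx => ((hf x (hsub hx)).sub
      (((hasDerivAt_id x).const_mul (f' 0)).congr_deriv (mul_one _))).hasDerivWithinAt)
    (fun x hx => by
      have hx' : |x| ≤ |t| := by simpa using hx
      simpa only [Real.norm_eq_abs] using (hf'_lip x (hsub hx)).trans (by gcongr))
    (mem_closedBall_self (abs_nonneg t)) (show t ∈ closedBall (0 : ℝ) |t| by simp)
  simp only [mul_zero, sub_zero, Real.norm_eq_abs] at key
  calc |f t - f 0 - f' 0 * t| = |f t - f' 0 * t - f 0| := by ring_nf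
    _ ≤ M * |t| * |t| := key
    _ = M * t ^ 2 := by rw [mul_assoc, abs_mul_abs_self, sq]

theorem exists_abs_one_add_rpow_sub_le (p : ℝ) :
    ∃ K, ∀ t : ℝ, |t| ≤ 1 / 2 → |(1 + t) ^ p - 1 - p * t| ≤ K * t ^ 2 := by
  have hpos : ∀ x ∈ closedBall (0 : ℝ) (1 / 2), 0 < 1 + x := fun x hx => by
    have := (abs_le.1 (mem_closedBall_zero_iff.1 hx)).1; linarith
  have hderiv (q : ℝ) : ∀ x ∈ closedBall (0 : ℝ) (1 / 2),
      HasDerivAt (fun x => (1 + x) ^ q) (q * (1 + x) ^ (q - 1)) x := fun x hx =>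
    (hasDerivAt_rpow_const (Or.inl (hpos x hx).ne')).comp_const_add 1 x
  obtain ⟨K, hK⟩ := (isCompact_closedBall (0 : ℝ) (1 / 2)).exists_bound_of_continuousOn
    (f := fun x => p * ((p - 1) * (1 + x) ^ (p - 2)))
    (fun x hx => ((hderiv (p - 2) x hx).continuousAt.const_mul _ |>.const_mul _).continuousWithinAt)
  refine ⟨K, fun t ht => ?_⟩
  simpa using abs_sub_sub_mul_le_of_hasDerivAt (hderiv p)
    (fun x hx => by simpa [sub_sub, one_add_one_eq_two] using (hderiv (p - 1) x hx).const_mul p)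
    (fun x hx => by simpa only [Real.norm_eq_abs] using hK x hx) ht

/-- The first-order Taylor remainder of `u ↦ |u| ^ p` at `s`, evaluated at `s + z`. -/
noncomputable def rpowTaylorRemainder (p s z : ℝ) : ℝ :=
  |z + s| ^ p - s ^ p - p * s ^ (p - 1) * z

theorem exists_abs_rpowTaylorRemainder_le_of_abs_le (p : ℝ) :
    ∃ K, ∀ s z : ℝ, 0 < s → |z| ≤ s / 2 →
      |rpowTaylorRemainder p s z| ≤ K * s ^ (p - 2) * z ^ 2 := by
  obtain ⟨K, hK⟩ := exists_abs_one_add_rpow_sub_le p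
  refine ⟨K, fun s z hs hz => ?_⟩
  have ht : |z / s| ≤ 1 / 2 := by
    rw [abs_div, abs_of_pos hs, div_le_iff₀ hs]; linarith
  have hzs : z + s = s * (1 + z / s) := by field_simp; ring
  have hpos : 0 < 1 + z / s := by linarith [(abs_le.1 ht).1]
  have hR : rpowTaylorRemainder p s z = s ^ p * ((1 + z / s) ^ p - 1 - p * (z / s)) := by
    rw [rpowTaylorRemainder, hzs, abs_of_pos (mul_pos hs hpos), mul_rpow hs.le hpos.le,
      rpow_sub_one hs.ne']
    field_simp
  calc |rpowTaylorRemainder p s z| = s ^ p * |(1 + z / s) ^ p - 1 - p * (z / s)| := by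
        rw [hR, abs_mul, abs_of_pos (rpow_pos_of_pos hs p)]
    _ ≤ s ^ p * (K * (z / s) ^ 2) := by gcongr; exact hK _ ht
    _ = K * s ^ (p - 2) * z ^ 2 := by rw [rpow_sub hs, rpow_two]; field_simp

theorem abs_rpowTaylorRemainder_le_of_lt_abs {p s z : ℝ} (hs : 0 < s) (hz : s / 2 < |z|) :
    |rpowTaylorRemainder p s z| ≤ |z + s| ^ p + (4 + 2 * |p|) * s ^ (p - 2) * z ^ 2 := by
  have hs2 : s ^ p = s ^ (p - 2) * s ^ 2 := by rw [rpow_sub hs, rpow_two]; field_simp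
  have hs1 : s ^ (p - 1) = s ^ (p - 2) * s := by rw [rpow_sub_one hs.ne', hs2]; field_simp
  have hsz : s ≤ 2 * |z| := by linarith
  have hsq : s ^ 2 ≤ 4 * z ^ 2 := by nlinarith [sq_abs z]
  have h2 : 0 ≤ s ^ (p - 2) := rpow_nonneg hs.le _
  have hlin : |p * s ^ (p - 1) * z| ≤ 2 * |p| * s ^ (p - 2) * z ^ 2 := by
    rw [abs_mul, abs_mul, abs_of_nonneg (rpow_nonneg hs.le _), hs1, ← sq_abs z]
    have : s * |z| ≤ 2 * |z| ^ 2 := by nlinarith [abs_nonneg z]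
    calc |p| * (s ^ (p - 2) * s) * |z| = |p| * s ^ (p - 2) * (s * |z|) := by ring
      _ ≤ |p| * s ^ (p - 2) * (2 * |z| ^ 2) := by gcongr
      _ = _ := by ring
  have hconst : |s ^ p| ≤ 4 * s ^ (p - 2) * z ^ 2 := by
    rw [abs_of_nonneg (rpow_nonneg hs.le _), hs2]; nlinarith
  calc |rpowTaylorRemainder p s z|
      ≤ |(|z + s| ^ p)| + |s ^ p| + |p * s ^ (p - 1) * z| :=
        (abs_sub _ _).trans (add_le_add_left (abs_sub _ _) _)
    _ ≤ _ := by rw [abs_of_nonneg (by positivity : (0 : ℝ) ≤ |z + s| ^ p)]; linarith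

theorem gaussianPDFReal_zero_one_le (s z : ℝ) :
    gaussianPDFReal 0 1 z ≤ exp ((s ^ 2 - 8 * z ^ 2) / 18) * exp (-(1 / 36) * (z + s) ^ 2) := by
  have hc : (√(2 * π))⁻¹ ≤ 1 :=
    inv_le_one_of_one_le₀ (one_le_sqrt.2 (by linarith [pi_gt_three]))
  rw [gaussianPDFReal, ← exp_add]
  simp only [NNReal.coe_one, mul_one, sub_zero]
  calc (√(2 * π))⁻¹ * exp (-z ^ 2 / 2) ≤ 1 * exp (-z ^ 2 / 2) := by gcongr
    _ ≤ _ := by rw [one_mul]; gcongr; nlinarith [sq_nonneg (z - s)]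

instance isProbabilityMeasure_γ : IsProbabilityMeasure γ := by unfold γ; infer_instance

theorem integrable_γ_iff {g : ℝ → ℝ} :
    Integrable g γ ↔ Integrable fun z => gaussianPDFReal 0 1 z * g z := by
  rw [γ, gaussianReal_of_var_ne_zero _ one_ne_zero, integrable_withDensity_iff_integrable_smul'
    (measurable_gaussianPDF _ _) (ae_of_all _ fun _ => gaussianPDF_lt_top)]
  simp [toReal_gaussianPDF]

theorem integrable_abs_add_rpow_γ {p : ℝ} (hp : -1 < p) (s : ℝ) :
    Integrable (fun z => |z + s| ^ p) γ := by
  refine integrable_γ_iff.2 <| Integrable.mono'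
    (((integrable_abs_rpow_mul_exp_neg_mul_sq hp (by norm_num : (0 : ℝ) < 1 / 36)).comp_add_right
      s).const_mul (exp (s ^ 2 / 18))) (by fun_prop) (ae_of_all _ fun z => ?_)
  rw [norm_mul, Real.norm_of_nonneg (gaussianPDFReal_nonneg _ _ _),
    Real.norm_of_nonneg (by positivity)]
  calc gaussianPDFReal 0 1 z * |z + s| ^ p
      ≤ exp ((s ^ 2 - 8 * z ^ 2) / 18) * exp (-(1 / 36) * (z + s) ^ 2) * |z + s| ^ p := by
        gcongr; exact gaussianPDFReal_zero_one_le s z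
    _ ≤ exp (s ^ 2 / 18) * (|z + s| ^ p * exp (-(1 / 36) * (z + s) ^ 2)) := by
        rw [mul_comm (|z + s| ^ p), ← mul_assoc]; gcongr; nlinarith

theorem lam_sub_rpow_eq_integral {p : ℝ} (hp : -1 < p) (s : ℝ) :
    lam p s - s ^ p = ∫ z, rpowTaylorRemainder p s z ∂γ := by
  have hid : Integrable (fun z => p * s ^ (p - 1) * z) γ :=
    ((memLp_id_gaussianReal 1).integrable le_rfl).const_mul _
  have hpow := integrable_abs_add_rpow_γ hp s
  have hdiff : Integrable (fun z => |z + s| ^ p - s ^ p) γ := hpow.sub (integrable_const _)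
  have hmean : ∫ z, z ∂γ = 0 := integral_id_gaussianReal
  unfold rpowTaylorRemainder
  rw [integral_sub hdiff hid, integral_sub hpow (integrable_const _),
    integral_const_mul, integral_const]
  simp [lam, hmean]

theorem exists_gaussianPDFReal_mul_abs_rpowTaylorRemainder_le (p : ℝ) :
    ∃ K, ∀ s z : ℝ, 0 < s → gaussianPDFReal 0 1 z * |rpowTaylorRemainder p s z| ≤
      K * s ^ (p - 2) * (gaussianPDFReal 0 1 z * z ^ 2) +
        exp (-s ^ 2 / 18) * (|z + s| ^ p * exp (-(1 / 36) * (z + s) ^ 2)) := by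
  obtain ⟨K, hK⟩ := exists_abs_rpowTaylorRemainder_le_of_abs_le p
  refine ⟨max K (4 + 2 * |p|), fun s z hs => ?_⟩
  have hφ := gaussianPDFReal_nonneg 0 1 z
  have hmain : 0 ≤ s ^ (p - 2) * (gaussianPDFReal 0 1 z * z ^ 2) := by positivity
  have htail : 0 ≤ exp (-s ^ 2 / 18) * (|z + s| ^ p * exp (-(1 / 36) * (z + s) ^ 2)) := by
    positivity
  rcases le_or_gt |z| (s / 2) with hz | hz
  · calc gaussianPDFReal 0 1 z * |rpowTaylorRemainder p s z|
        ≤ gaussianPDFReal 0 1 z * (K * s ^ (p - 2) * z ^ 2) := by gcongr; exact hK s z hs hz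
      _ = K * (s ^ (p - 2) * (gaussianPDFReal 0 1 z * z ^ 2)) := by ring
      _ ≤ max K (4 + 2 * |p|) * (s ^ (p - 2) * (gaussianPDFReal 0 1 z * z ^ 2)) := by
          gcongr; exact le_max_left _ _
      _ ≤ _ := by linarith
  · have hφ_tail : gaussianPDFReal 0 1 z ≤ exp (-s ^ 2 / 18) * exp (-(1 / 36) * (z + s) ^ 2) :=
      (gaussianPDFReal_zero_one_le s z).trans <| by gcongr; nlinarith [sq_abs z]
    calc gaussianPDFReal 0 1 z * |rpowTaylorRemainder p s z|
        ≤ gaussianPDFReal 0 1 z * (|z + s| ^ p + (4 + 2 * |p|) * s ^ (p - 2) * z ^ 2) := by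
          gcongr; exact abs_rpowTaylorRemainder_le_of_lt_abs hs hz
      _ = gaussianPDFReal 0 1 z * |z + s| ^ p +
            (4 + 2 * |p|) * (s ^ (p - 2) * (gaussianPDFReal 0 1 z * z ^ 2)) := by ring
      _ ≤ exp (-s ^ 2 / 18) * exp (-(1 / 36) * (z + s) ^ 2) * |z + s| ^ p +
            max K (4 + 2 * |p|) * (s ^ (p - 2) * (gaussianPDFReal 0 1 z * z ^ 2)) := by
          gcongr; exact le_max_right _ _
      _ = _ := by ring

theorem exp_neg_sq_div_le_rpow {s r : ℝ} (hs : 1 ≤ s) (hr : -4 ≤ r) :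
    exp (-s ^ 2 / 18) ≤ 648 * s ^ r := by
  have hs0 : 0 < s := by linarith
  have hexp : s ^ 4 / 648 ≤ exp (s ^ 2 / 18) := by
    have := pow_div_factorial_le_exp (x := s ^ 2 / 18) (by positivity) 2
    norm_num [Nat.factorial] at this
    linarith
  calc exp (-s ^ 2 / 18) = (exp (s ^ 2 / 18))⁻¹ := by rw [← exp_neg]; ring_nf
    _ ≤ (s ^ 4 / 648)⁻¹ := by gcongr
    _ = 648 * s ^ (-4 : ℝ) := by rw [rpow_neg hs0.le, rpow_ofNat]; field_simp
    _ ≤ 648 * s ^ r := by gcongr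

theorem exists_abs_lam_sub_rpow_le {p : ℝ} (hp : -1 < p) :
    ∃ C, ∀ s : ℝ, 1 < s → |lam p s - s ^ p| ≤ C * s ^ (p - 2) := by
  obtain ⟨K, hK⟩ := exists_gaussianPDFReal_mul_abs_rpowTaylorRemainder_le p
  set m₂ := ∫ z, gaussianPDFReal 0 1 z * z ^ 2
  set J := ∫ u, |u| ^ p * exp (-(1 / 36) * u ^ 2)
  have hm₂ : Integrable fun z => gaussianPDFReal 0 1 z * z ^ 2 :=
    integrable_γ_iff.1 (memLp_id_gaussianReal 2).integrable_sq
  have hw := integrable_abs_rpow_mul_exp_neg_mul_sq hp (by norm_num : (0 : ℝ) < 1 / 36)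
  have hJ : 0 ≤ J := integral_nonneg fun u => by positivity
  refine ⟨K * m₂ + 648 * J, fun s hs => ?_⟩
  have hs0 : 0 < s := by linarith
  calc |lam p s - s ^ p| = ‖∫ z, gaussianPDFReal 0 1 z * rpowTaylorRemainder p s z‖ := by
        rw [lam_sub_rpow_eq_integral hp, γ, integral_gaussianReal_eq_integral_smul one_ne_zero]
        rfl
    _ ≤ ∫ z, (K * s ^ (p - 2) * (gaussianPDFReal 0 1 z * z ^ 2) +
          exp (-s ^ 2 / 18) * (|z + s| ^ p * exp (-(1 / 36) * (z + s) ^ 2))) := by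
        refine norm_integral_le_of_norm_le ((hm₂.const_mul _).add
          ((hw.comp_add_right s).const_mul _)) (ae_of_all _ fun z => ?_)
        rw [norm_mul, Real.norm_of_nonneg (gaussianPDFReal_nonneg _ _ _)]
        exact hK s z hs0
    _ = K * s ^ (p - 2) * m₂ + exp (-s ^ 2 / 18) * J := by
        rw [integral_add (hm₂.const_mul _) ((hw.comp_add_right s).const_mul _),
          integral_const_mul, integral_const_mul,
          integral_add_right_eq_self (fun u => |u| ^ p * exp (-(1 / 36) * u ^ 2))]
    _ ≤ K * s ^ (p - 2) * m₂ + 648 * s ^ (p - 2) * J := by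
        gcongr; exact exp_neg_sq_div_le_rpow hs.le (by linarith)
    _ = (K * m₂ + 648 * J) * s ^ (p - 2) := by ring

theorem lam_neg (p s : ℝ) : lam p (-s) = lam p s := by
  have hγ : γ.map (fun z => -z) = γ := by rw [γ, gaussianReal_map_neg, neg_zero]
  conv_lhs => rw [lam, ← hγ]
  rw [integral_map (by fun_prop) (Measurable.aestronglyMeasurable (by fun_prop))]
  simp_rw [← neg_add, abs_neg, lam]

/-- For each `p ∈ (-1,∞)` there is `C > 0` with `|λ_p(s) − |s|^p| ≤ C·|s|^{p-2}` whenever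
`|s| > 1`. -/
theorem stmt6 (p : ℝ) (hp : -1 < p) :
    ∃ C : ℝ, 0 < C ∧ ∀ s : ℝ, 1 < |s| → |lam p s - |s| ^ p| ≤ C * |s| ^ (p - 2) := by
  obtain ⟨C, hC⟩ := exists_abs_lam_sub_rpow_le hp
  refine ⟨max C 1, by positivity, fun s hs => ?_⟩
  have hlam : lam p s = lam p |s| := by
    rcases abs_choice s with h | h <;> rw [h]
    rw [lam_neg]
  rw [hlam]
  exact (hC |s| hs).trans (by gcongr; exact le_max_left _ _)
end

section
/- There exist constants c > 0 and C > 0 such that for every natural number d ≥ 2 and every real s one has c·min(s²,1)·ln d ≤ μ̃_d(0) − μ̃_d(s) ≤ C·min(s²,1)·ln d. -/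
open MeasureTheory ProbabilityTheory Real Set

/-- `μ̃_d(s) = E min(|Z+s|⁻¹, d)` for a standard normal `Z`. -/
noncomputable def tmu (d : ℕ) (s : ℝ) : ℝ := ∫ z, min |z + s|⁻¹ (d : ℝ) ∂γ

/-!
By the layer-cake formula, `μ̃_d(s) = ∫₀^d γ(B(s, 1/t)) dt`, so `μ̃_d(0) − μ̃_d(s)` is the integral
over `t ∈ (0, d]` of the mass lost when the ball of radius `r = 1/t` is moved from `0` to `s`.
That loss equals `∫₀^s (φ(x − r) − φ(x + r)) dx`, and the integrand
`φ(x − r) − φ(x + r) = φ(x − r)(1 − e^{−2rx})` is comparable to `x · min(r, 1)` for `x ≤ 1`.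
Hence the loss is comparable to `min(s², 1) · min(r, 1)`, and `∫₀^d min(1, 1/t) dt = 1 + ln d`
is comparable to `ln d` for `d ≥ 2`.
-/

open Metric

section LayerCake

variable {α : Type*} [MetricSpace α] [MeasurableSpace α] (μ : Measure α) [IsFiniteMeasure μ]

lemma integrableOn_measureReal_closedBall_inv (a : α) (D : ℝ) :
    IntegrableOn (fun t : ℝ => μ.real (closedBall a t⁻¹)) (Ioc 0 D) := by
  have hmono : Monotone fun r : ℝ => μ.real (closedBall a r) :=
    fun r r' h => measureReal_mono (closedBall_subset_closedBall h)
  refine Measure.integrableOn_of_bounded (M := μ.real univ) measure_Ioc_lt_top.ne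
    (hmono.measurable.comp measurable_inv).aestronglyMeasurable (ae_of_all _ fun t => ?_)
  rw [Real.norm_of_nonneg measureReal_nonneg]
  exact measureReal_mono (subset_univ _)

lemma integral_min_inv_dist_eq [OpensMeasurableSpace α] [NullSingletonClass μ] (a : α) {D : ℝ}
    (hD : 0 ≤ D) :
    ∫ z, min (dist z a)⁻¹ D ∂μ = ∫ t in Ioc 0 D, μ.real (closedBall a t⁻¹) := by
  have hnn : ∀ z, 0 ≤ min (dist z a)⁻¹ D := fun z => le_min (inv_nonneg.2 dist_nonneg) hD
  have hint : Integrable (fun z => min (dist z a)⁻¹ D) μ := by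
    refine (integrable_const D).mono'
      ((continuous_id.dist continuous_const).measurable.inv.min
        measurable_const).aestronglyMeasurable
      (ae_of_all _ fun z => ?_)
    rw [Real.norm_of_nonneg (hnn z)]
    exact min_le_right _ _
  rw [hint.integral_eq_integral_Ioc_meas_le (ae_of_all _ hnn)
    (ae_of_all _ fun z => min_le_right _ _)]
  refine setIntegral_congr_fun measurableSet_Ioc fun t ⟨ht0, htD⟩ => ?_
  -- `t ≤ (dist z a)⁻¹` fails at `z = a` because `0⁻¹ = 0`
  have hset : {z | t ≤ min (dist z a)⁻¹ D} = closedBall a t⁻¹ \ {a} := by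
    ext z
    simp only [mem_ofPred_eq, le_min_iff, htD, and_true, mem_sdiff, mem_closedBall,
      mem_singleton_iff]
    constructor
    · intro h
      have hz : z ≠ a := by rintro rfl; rw [dist_self, inv_zero] at h; linarith
      exact ⟨(le_inv_comm₀ ht0 (dist_pos.2 hz)).1 h, hz⟩
    · rintro ⟨h, hz⟩
      exact (le_inv_comm₀ ht0 (dist_pos.2 hz)).2 h
  rw [hset, measureReal_def, measure_sdiff_null (measure_singleton a), ← measureReal_def]

end LayerCake

noncomputable def φ (x : ℝ) : ℝ := (√(2 * π))⁻¹ * exp (-x ^ 2 / 2)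

lemma gaussianPDFReal_zero_one : gaussianPDFReal 0 1 = φ := by
  ext x
  simp [gaussianPDFReal, φ]

lemma continuous_φ : Continuous φ := by
  unfold φ
  fun_prop

lemma continuous_φ_sub_sub_φ_add (r : ℝ) : Continuous fun x => φ (x - r) - φ (x + r) :=
  (continuous_φ.comp (continuous_sub_right r)).sub (continuous_φ.comp (continuous_add_const r))

lemma φ_nonneg (x : ℝ) : 0 ≤ φ x := by
  unfold φ
  positivity

lemma inv_sqrt_two_pi_le_half : (√(2 * π))⁻¹ ≤ 1 / 2 := by
  rw [inv_le_comm₀ (by positivity) (by norm_num), one_div, inv_inv,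
    le_sqrt (by norm_num) (by positivity)]
  nlinarith [pi_gt_three]

lemma three_eighths_le_inv_sqrt_two_pi : 3 / 8 ≤ (√(2 * π))⁻¹ := by
  rw [le_inv_comm₀ (by norm_num) (by positivity), inv_div, sqrt_le_left (by norm_num)]
  nlinarith [pi_lt_d2]

lemma φ_le_half (x : ℝ) : φ x ≤ 1 / 2 := by
  have hexp : exp (-x ^ 2 / 2) ≤ 1 := exp_le_one_iff.2 (by nlinarith [sq_nonneg x])
  calc φ x ≤ (√(2 * π))⁻¹ * 1 := by unfold φ; gcongr
    _ ≤ 1 / 2 := by simpa using inv_sqrt_two_pi_le_half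

lemma φ_add (x r : ℝ) : φ (x + r) = φ (x - r) * exp (-(2 * r * x)) := by
  unfold φ
  rw [mul_assoc, ← exp_add]
  ring_nf

lemma mul_exp_neg_sq_div_two_le_one (y : ℝ) : y * exp (-y ^ 2 / 2) ≤ 1 := by
  have hy : y ≤ exp (y ^ 2 / 2) := by nlinarith [add_one_le_exp (y ^ 2 / 2), sq_nonneg (y - 1)]
  calc y * exp (-y ^ 2 / 2) ≤ exp (y ^ 2 / 2) * exp (-y ^ 2 / 2) := by gcongr
    _ = 1 := by rw [← exp_add]; ring_nf; exact exp_zero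

lemma φ_sub_sub_φ_add_nonneg {x r : ℝ} (hx : 0 ≤ x) (hr : 0 ≤ r) :
    0 ≤ φ (x - r) - φ (x + r) := by
  have h : exp (-(2 * r * x)) ≤ 1 := exp_le_one_iff.2 (by nlinarith)
  rw [φ_add]
  nlinarith [φ_nonneg (x - r)]

lemma φ_sub_sub_φ_add_le {x r : ℝ} (hx0 : 0 ≤ x) (hx1 : x ≤ 1) (hr : 0 ≤ r) :
    φ (x - r) - φ (x + r) ≤ 2 * min r 1 * x := by
  set E := exp (-(x - r) ^ 2 / 2)
  have hE1 : E ≤ 1 := exp_le_one_iff.2 (by nlinarith [sq_nonneg (x - r)])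
  -- `r E = (r - x) E + x E`, and `y ↦ y exp (-y²/2)` is bounded by `1`
  have hrE : r * E ≤ 2 := by
    have h := mul_exp_neg_sq_div_two_le_one (r - x)
    rw [show (r - x) ^ 2 = (x - r) ^ 2 by ring] at h
    nlinarith [exp_pos (-(x - r) ^ 2 / 2)]
  have hφr : φ (x - r) * r ≤ min r 1 := by
    have hc : (√(2 * π))⁻¹ * (r * E) ≤ 1 / 2 * (r * E) := by
      have : 0 ≤ r * E := mul_nonneg hr (exp_pos _).le
      gcongr
      exact inv_sqrt_two_pi_le_half
    have hφ : φ (x - r) * r = (√(2 * π))⁻¹ * (r * E) := by simp only [φ, E]; ring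
    refine le_min ?_ ?_ <;> nlinarith
  have hexp : 1 - exp (-(2 * r * x)) ≤ 2 * r * x := by linarith [add_one_le_exp (-(2 * r * x))]
  calc φ (x - r) - φ (x + r) = φ (x - r) * (1 - exp (-(2 * r * x))) := by rw [φ_add]; ring
    _ ≤ φ (x - r) * (2 * r * x) := by gcongr; exact φ_nonneg _
    _ = 2 * x * (φ (x - r) * r) := by ring
    _ ≤ 2 * x * min r 1 := by gcongr
    _ = 2 * min r 1 * x := by ring

lemma le_φ_sub_sub_φ_add {x r : ℝ} (hx0 : 0 ≤ x) (hx1 : x ≤ 1) (hr0 : 0 ≤ r) (hr1 : r ≤ 1) :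
    r * x / 8 ≤ φ (x - r) - φ (x + r) := by
  have hφ : 3 / 16 ≤ φ (x - r) := by
    have hE : 1 / 2 ≤ exp (-(x - r) ^ 2 / 2) := by
      nlinarith [add_one_le_exp (-(x - r) ^ 2 / 2)]
    have hc := three_eighths_le_inv_sqrt_two_pi
    unfold φ
    nlinarith
  -- `1 - exp (-u) ≥ u / (1 + u) ≥ u / 3` for `u = 2 r x ∈ [0, 2]`
  have hexp : 2 * r * x / 3 ≤ 1 - exp (-(2 * r * x)) := by
    have h := add_one_le_exp (2 * r * x)
    have hprod : exp (-(2 * r * x)) * exp (2 * r * x) = 1 := by rw [← exp_add]; simp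
    nlinarith [exp_pos (-(2 * r * x)), mul_nonneg hr0 hx0, mul_le_one₀ hr1 hx0 hx1]
  calc r * x / 8 = 3 / 16 * (2 * r * x / 3) := by ring
    _ ≤ φ (x - r) * (1 - exp (-(2 * r * x))) := by gcongr
    _ = φ (x - r) - φ (x + r) := by rw [φ_add]; ring

instance : IsProbabilityMeasure γ := inferInstanceAs (IsProbabilityMeasure (gaussianReal 0 1))

instance : NullSingletonClass γ := nullSingletonClass_gaussianReal one_ne_zero

lemma γ_real_Icc {a b : ℝ} (hab : a ≤ b) : γ.real (Icc a b) = ∫ x in a..b, φ x := by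
  rw [measureReal_def, γ, gaussianReal_apply_eq_integral 0 one_ne_zero,
    ENNReal.toReal_ofReal
      (setIntegral_nonneg measurableSet_Icc fun x _ => gaussianPDFReal_nonneg 0 1 x),
    integral_Icc_eq_integral_Ioc, ← intervalIntegral.integral_of_le hab, gaussianPDFReal_zero_one]

lemma γ_real_closedBall (s : ℝ) {r : ℝ} (hr : 0 ≤ r) :
    γ.real (closedBall s r) = ∫ x in s - r..s + r, φ x := by
  rw [Real.closedBall_eq_Icc, γ_real_Icc (by linarith)]

lemma γ_real_closedBall_neg (s r : ℝ) : γ.real (closedBall (-s) r) = γ.real (closedBall s r) := by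
  have hmap : γ.map (fun x => -x) = γ := by
    unfold γ
    simpa only [neg_zero] using gaussianReal_map_neg (μ := 0) (v := 1)
  conv_lhs => rw [← hmap, map_measureReal_apply measurable_neg measurableSet_closedBall]
  rw [← neg_neg s, ← neg_closedBall, neg_neg]
  exact congrArg γ.real (neg_neg (closedBall s r))

lemma tmu_eq_integral (d : ℕ) (s : ℝ) :
    tmu d s = ∫ t in Ioc 0 (d : ℝ), γ.real (closedBall s t⁻¹) := by
  have h := integral_min_inv_dist_eq γ (-s) (Nat.cast_nonneg d)
  simp only [Real.dist_eq, sub_neg_eq_add, γ_real_closedBall_neg] at h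
  exact h

lemma tmu_neg (d : ℕ) (s : ℝ) : tmu d (-s) = tmu d s := by
  simp only [tmu_eq_integral, γ_real_closedBall_neg]

noncomputable def ballDeficit (s r : ℝ) : ℝ := γ.real (closedBall 0 r) - γ.real (closedBall s r)

lemma tmu_zero_sub_tmu (d : ℕ) (s : ℝ) :
    tmu d 0 - tmu d s = ∫ t in Ioc 0 (d : ℝ), ballDeficit s t⁻¹ := by
  rw [tmu_eq_integral, tmu_eq_integral, ← integral_sub
    (integrableOn_measureReal_closedBall_inv γ 0 d) (integrableOn_measureReal_closedBall_inv γ s d)]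
  rfl

lemma integrableOn_ballDeficit_inv (s D : ℝ) :
    IntegrableOn (fun t => ballDeficit s t⁻¹) (Ioc 0 D) :=
  (integrableOn_measureReal_closedBall_inv γ 0 D).sub
    (integrableOn_measureReal_closedBall_inv γ s D)

lemma ballDeficit_eq_integral (s : ℝ) {r : ℝ} (hr : 0 ≤ r) :
    ballDeficit s r = ∫ x in 0..s, (φ (x - r) - φ (x + r)) := by
  have hφ (a b : ℝ) : IntervalIntegrable φ volume a b := continuous_φ.intervalIntegrable a b
  rw [ballDeficit, γ_real_closedBall 0 hr, γ_real_closedBall s hr,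
    intervalIntegral.integral_sub (f := fun x => φ (x - r)) (g := fun x => φ (x + r))
      ((continuous_φ.comp (continuous_sub_right r)).intervalIntegrable _ _)
      ((continuous_φ.comp (continuous_add_const r)).intervalIntegrable _ _),
    intervalIntegral.integral_comp_sub_right φ, intervalIntegral.integral_comp_add_right φ,
    intervalIntegral.integral_interval_sub_interval_comm (hφ _ _) (hφ _ _) (hφ _ _)]

lemma ballDeficit_le_ballDeficit {s s' r : ℝ} (hs : 0 ≤ s) (hss' : s ≤ s') (hr : 0 ≤ r) :
    ballDeficit s r ≤ ballDeficit s' r := by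
  rw [ballDeficit_eq_integral s hr, ballDeficit_eq_integral s' hr, ← sub_nonneg,
    intervalIntegral.integral_interval_sub_left]
  · exact intervalIntegral.integral_nonneg hss' fun x hx =>
      φ_sub_sub_φ_add_nonneg (hs.trans hx.1) hr
  all_goals exact (continuous_φ_sub_sub_φ_add r).intervalIntegrable _ _

lemma ballDeficit_nonneg {s r : ℝ} (hs : 0 ≤ s) (hr : 0 ≤ r) : 0 ≤ ballDeficit s r := by
  simpa [ballDeficit] using ballDeficit_le_ballDeficit le_rfl hs hr

lemma γ_real_closedBall_zero_le {r : ℝ} (hr : 0 ≤ r) : γ.real (closedBall 0 r) ≤ min 1 r := by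
  refine le_min measureReal_le_one ?_
  rw [γ_real_closedBall 0 hr]
  calc ∫ x in 0 - r..0 + r, φ x ≤ ∫ _ in 0 - r..0 + r, (1 / 2 : ℝ) :=
        intervalIntegral.integral_mono_on (by linarith) (continuous_φ.intervalIntegrable _ _)
          intervalIntegrable_const fun x _ => φ_le_half x
    _ = r := by simp only [intervalIntegral.integral_const, smul_eq_mul]; ring

lemma ballDeficit_le_sq_mul {s r : ℝ} (hs0 : 0 ≤ s) (hs1 : s ≤ 1) (hr : 0 ≤ r) :
    ballDeficit s r ≤ s ^ 2 * min r 1 := by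
  rw [ballDeficit_eq_integral s hr]
  calc ∫ x in 0..s, (φ (x - r) - φ (x + r)) ≤ ∫ x in 0..s, 2 * min r 1 * x :=
        intervalIntegral.integral_mono_on hs0
          ((continuous_φ_sub_sub_φ_add r).intervalIntegrable _ _)
          ((continuous_const.mul continuous_id).intervalIntegrable _ _)
          fun x hx => φ_sub_sub_φ_add_le hx.1 (hx.2.trans hs1) hr
    _ = s ^ 2 * min r 1 := by rw [intervalIntegral.integral_const_mul, integral_id]; ring

lemma ballDeficit_le {s r : ℝ} (hs : 0 ≤ s) (hr : 0 ≤ r) :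
    ballDeficit s r ≤ min (s ^ 2) 1 * min 1 r := by
  rcases le_total s 1 with hs1 | hs1
  · rw [min_eq_left (by nlinarith), min_comm 1 r]
    exact ballDeficit_le_sq_mul hs hs1 hr
  · rw [min_eq_right (by nlinarith), one_mul]
    exact (sub_le_self _ measureReal_nonneg).trans (γ_real_closedBall_zero_le hr)

lemma sq_mul_le_ballDeficit {s r : ℝ} (hs0 : 0 ≤ s) (hs1 : s ≤ 1) (hr0 : 0 ≤ r) (hr1 : r ≤ 1) :
    s ^ 2 * r / 16 ≤ ballDeficit s r := by
  rw [ballDeficit_eq_integral s hr0]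
  calc s ^ 2 * r / 16 = ∫ x in 0..s, r / 8 * x := by
        rw [intervalIntegral.integral_const_mul, integral_id]; ring
    _ ≤ ∫ x in 0..s, (φ (x - r) - φ (x + r)) :=
        intervalIntegral.integral_mono_on hs0
          ((continuous_const.mul continuous_id).intervalIntegrable _ _)
          ((continuous_φ_sub_sub_φ_add r).intervalIntegrable _ _)
          fun x hx => by
            have h := le_φ_sub_sub_φ_add hx.1 (hx.2.trans hs1) hr0 hr1
            linarith

lemma le_ballDeficit {s r : ℝ} (hs : 0 ≤ s) (hr0 : 0 ≤ r) (hr1 : r ≤ 1) :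
    min (s ^ 2) 1 * r / 16 ≤ ballDeficit s r := by
  rcases le_total s 1 with hs1 | hs1
  · rw [min_eq_left (by nlinarith)]
    exact sq_mul_le_ballDeficit hs hs1 hr0 hr1
  · rw [min_eq_right (by nlinarith)]
    simpa using (sq_mul_le_ballDeficit zero_le_one le_rfl hr0 hr1).trans
      (ballDeficit_le_ballDeficit zero_le_one hs1 hr0)

lemma integrableOn_min_one_inv (D : ℝ) : IntegrableOn (fun t : ℝ => min 1 t⁻¹) (Ioc 0 D) := by
  refine Measure.integrableOn_of_bounded (M := 1) measure_Ioc_lt_top.ne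
    (measurable_const.min measurable_inv).aestronglyMeasurable
    ((ae_restrict_iff' measurableSet_Ioc).2 (ae_of_all _ fun t ht => ?_))
  rw [Real.norm_of_nonneg (le_min zero_le_one (inv_nonneg.2 ht.1.le))]
  exact min_le_left _ _

lemma integral_Ioc_one_inv {D : ℝ} (hD : 1 ≤ D) : ∫ t in Ioc 1 D, t⁻¹ = log D := by
  rw [← intervalIntegral.integral_of_le hD, integral_inv_of_pos one_pos (by linarith), div_one]

lemma integral_Ioc_min_one_inv {D : ℝ} (hD : 1 ≤ D) : ∫ t in Ioc 0 D, min 1 t⁻¹ = 1 + log D := by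
  rw [← Ioc_union_Ioc_eq_Ioc zero_le_one hD, setIntegral_union (Ioc_disjoint_Ioc_of_le le_rfl)
    measurableSet_Ioc ((integrableOn_min_one_inv D).mono_set (Ioc_subset_Ioc_right hD))
    ((integrableOn_min_one_inv D).mono_set (Ioc_subset_Ioc_left zero_le_one)),
    ← integral_Ioc_one_inv hD]
  congr 1
  · rw [setIntegral_congr_fun measurableSet_Ioc fun t ht =>
      min_eq_left ((one_le_inv₀ ht.1).2 ht.2)]
    simp
  · exact setIntegral_congr_fun measurableSet_Ioc fun t ht =>
      min_eq_right (inv_le_one_of_one_le₀ ht.1.le)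

lemma integral_ballDeficit_le {s D : ℝ} (hs : 0 ≤ s) (hD : 1 ≤ D) :
    ∫ t in Ioc 0 D, ballDeficit s t⁻¹ ≤ min (s ^ 2) 1 * (1 + log D) := by
  rw [← integral_Ioc_min_one_inv hD, ← integral_const_mul]
  exact setIntegral_mono_on (integrableOn_ballDeficit_inv s D)
    ((integrableOn_min_one_inv D).const_mul _) measurableSet_Ioc
    fun t ht => ballDeficit_le hs (inv_nonneg.2 ht.1.le)

lemma le_integral_ballDeficit {s D : ℝ} (hs : 0 ≤ s) (hD : 1 ≤ D) :
    min (s ^ 2) 1 / 16 * log D ≤ ∫ t in Ioc 0 D, ballDeficit s t⁻¹ := by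
  have hsub : Ioc 1 D ⊆ Ioc 0 D := Ioc_subset_Ioc_left zero_le_one
  calc min (s ^ 2) 1 / 16 * log D = ∫ t in Ioc 1 D, min (s ^ 2) 1 / 16 * t⁻¹ := by
        rw [integral_const_mul, integral_Ioc_one_inv hD]
    _ ≤ ∫ t in Ioc 1 D, ballDeficit s t⁻¹ := by
        refine setIntegral_mono_on ((((integrableOn_min_one_inv D).mono_set hsub).congr_fun
          (fun t ht => min_eq_right (inv_le_one_of_one_le₀ ht.1.le)) measurableSet_Ioc).const_mul _)
          ((integrableOn_ballDeficit_inv s D).mono_set hsub) measurableSet_Ioc fun t ht => ?_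
        have h := le_ballDeficit hs (inv_nonneg.2 (zero_le_one.trans ht.1.le))
          (inv_le_one_of_one_le₀ ht.1.le)
        linarith
    _ ≤ ∫ t in Ioc 0 D, ballDeficit s t⁻¹ :=
        setIntegral_mono_set (integrableOn_ballDeficit_inv s D)
          ((ae_restrict_iff' measurableSet_Ioc).2 (ae_of_all _ fun t ht =>
            ballDeficit_nonneg hs (inv_nonneg.2 ht.1.le)))
          hsub.eventuallyLE

/-- There are `c, C > 0` such that for every `d ≥ 2` and every real `s`:
`c·min(s²,1)·ln d ≤ μ̃_d(0) − μ̃_d(s) ≤ C·min(s²,1)·ln d`. -/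
theorem stmt18 :
    ∃ c C : ℝ, 0 < c ∧ 0 < C ∧ ∀ d : ℕ, 2 ≤ d → ∀ s : ℝ,
      c * min (s ^ 2) 1 * Real.log d ≤ tmu d 0 - tmu d s ∧
      tmu d 0 - tmu d s ≤ C * min (s ^ 2) 1 * Real.log d := by
  refine ⟨1 / 16, 3, by norm_num, by norm_num, fun d hd s => ?_⟩
  wlog hs : 0 ≤ s generalizing s
  · simpa only [tmu_neg, neg_sq] using this (-s) (by linarith)
  have hd2 : (2 : ℝ) ≤ d := by exact_mod_cast hd
  have hlog : 1 / 2 ≤ log d := by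
    linarith [log_two_gt_d9, log_le_log two_pos hd2]
  have hm : 0 ≤ min (s ^ 2) 1 := le_min (sq_nonneg s) zero_le_one
  rw [tmu_zero_sub_tmu]
  constructor
  · linarith [le_integral_ballDeficit hs (one_le_two.trans hd2)]
  · nlinarith [integral_ballDeficit_le hs (one_le_two.trans hd2)]
end
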